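/- Let G be a graph with no isolated vertex and Δ(G) ≤ n(G) - 4. Then ∂_{2p}(G) ≤ n(G) - 4, with equality if and only if G has a dominating set of cardinality 2 which is a 2-packing. -/

import Mathlib

open Finset

variable {V : Type*}

/-- `S` is a 2-packing: closed neighbourhoods of distinct vertices of `S` are disjoint. -/
def IsPacking2 (G : SimpleGraph V) (S : Finset V) : Prop :=
  (S : Set V).Pairwise fun u v =>
    Disjoint (G.neighborSet u ∪ {u}) (G.neighborSet v ∪ {v})

/-- The external neighbourhood of `S`: vertices outside `S` with a neighbour in `S`. -/
def extN (G : SimpleGraph V) [Fintype V] [DecidableEq V] [DecidableRel G.Adj]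
    (S : Finset V) : Finset V :=
  Finset.univ.filter fun v => v ∉ S ∧ ∃ u ∈ S, G.Adj u v

/-- The differential of a set `S`: `|N_e(S)| - |S|`. -/
def diffSet (G : SimpleGraph V) [Fintype V] [DecidableEq V] [DecidableRel G.Adj]
    (S : Finset V) : ℤ :=
  ((extN G S).card : ℤ) - S.card

/-- The 2-packing differential of `G`. -/
noncomputable def pdiff2 (G : SimpleGraph V) [Fintype V] [DecidableEq V]
    [DecidableRel G.Adj] : ℤ :=
  sSup {d : ℤ | ∃ S : Finset V, IsPacking2 G S ∧ d = diffSet G S}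

/-- The packing number of `G`: maximum cardinality of a 2-packing. -/
noncomputable def packNum (G : SimpleGraph V) [Fintype V] : ℕ :=
  sSup {n : ℕ | ∃ S : Finset V, IsPacking2 G S ∧ n = S.card}

/-- `G` has no isolated vertex. -/
def NoIsolated (G : SimpleGraph V) : Prop := ∀ v : V, ∃ u, G.Adj v u

/-- `S` is a dominating set of `G`. -/
def IsDom (G : SimpleGraph V) (S : Finset V) : Prop :=
  ∀ v, v ∉ S → ∃ u ∈ S, G.Adj u v

/-!
Since `N_e(S) ⊆ V \ S`, every `S` has `∂(S) ≤ n - 2|S|`, with equality exactly when `S`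
dominates. For `|S| ≤ 1` one has `∂(S) < Δ(G) ≤ n - 4` instead, because `Δ(G) > 0` when there
is no isolated vertex. So `∂(S) ≤ n - 4` always, with equality iff `S` is a dominating set of
size two; the maximum defining `∂_{2p}` is attained, as there are finitely many sets.
-/

theorem NoIsolated.maxDegree_pos [Fintype V] [Nonempty V] {G : SimpleGraph V}
    [DecidableRel G.Adj] (h : NoIsolated G) : 0 < G.maxDegree := by
  obtain ⟨v⟩ := ‹Nonempty V›
  exact ((G.degree_pos_iff_exists_adj v).2 (h v)).trans_le (G.degree_le_maxDegree v)

theorem isPacking2_empty (G : SimpleGraph V) : IsPacking2 G ∅ := by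
  simp [IsPacking2]

section Differential

variable [Fintype V] [DecidableEq V] (G : SimpleGraph V) [DecidableRel G.Adj]

theorem extN_subset_compl (S : Finset V) : extN G S ⊆ Sᶜ := fun v hv => by
  simp only [extN, mem_filter] at hv
  exact mem_compl.2 hv.2.1

theorem extN_eq_compl_iff_isDom (S : Finset V) : extN G S = Sᶜ ↔ IsDom G S := by
  simp only [Finset.ext_iff, extN, mem_filter, mem_univ, true_and, mem_compl, IsDom]
  exact ⟨fun h v hv => ((h v).2 hv).2, fun h v => ⟨And.left, fun hv => ⟨hv, h v hv⟩⟩⟩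

theorem extN_singleton_subset_neighborFinset (u : V) : extN G {u} ⊆ G.neighborFinset u :=
  fun v hv => by
    simp only [extN, mem_filter, mem_singleton, exists_eq_left] at hv
    exact (G.mem_neighborFinset u v).2 hv.2.2

theorem diffSet_le_card_sub_two_mul (S : Finset V) :
    diffSet G S ≤ Fintype.card V - 2 * S.card := by
  have hext := card_le_card (extN_subset_compl G S)
  rw [card_compl] at hext
  have := S.card_le_univ
  simp only [diffSet]
  omega

theorem diffSet_eq_card_sub_two_mul_iff_isDom (S : Finset V) :
    diffSet G S = Fintype.card V - 2 * S.card ↔ IsDom G S := by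
  have hext := card_le_card (extN_subset_compl G S)
  have hcompl := card_compl S
  have := S.card_le_univ
  rw [← extN_eq_compl_iff_isDom]
  constructor
  · intro h
    refine eq_of_subset_of_card_le (extN_subset_compl G S) ?_
    simp only [diffSet] at h
    omega
  · intro h
    simp only [diffSet, h, hcompl]
    omega

theorem diffSet_lt_maxDegree (hpos : 0 < G.maxDegree) {S : Finset V} (hS : S.card ≤ 1) :
    diffSet G S < G.maxDegree := by
  obtain hS | hS := Nat.le_one_iff_eq_zero_or_eq_one.mp hS
  · rw [card_eq_zero] at hS
    simp [hS, diffSet, extN, hpos]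
  · obtain ⟨u, rfl⟩ := card_eq_one.mp hS
    have hext := card_le_card (extN_singleton_subset_neighborFinset G u)
    have := G.degree_le_maxDegree u
    rw [G.card_neighborFinset_eq_degree] at hext
    simp only [diffSet, card_singleton]
    omega

section BoundedMaxDegree

variable {G} (hpos : 0 < G.maxDegree) (hΔ : (G.maxDegree : ℤ) ≤ Fintype.card V - 4)
include hpos hΔ

theorem diffSet_lt_card_sub_four_of_card_ne_two {S : Finset V} (hS : S.card ≠ 2) :
    diffSet G S < Fintype.card V - 4 := by
  rcases Nat.lt_or_ge S.card 2 with hsmall | hlarge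
  · have := diffSet_lt_maxDegree G hpos (Nat.le_of_lt_succ hsmall)
    omega
  · have := diffSet_le_card_sub_two_mul G S
    omega

theorem diffSet_le_card_sub_four (S : Finset V) : diffSet G S ≤ Fintype.card V - 4 := by
  by_cases hS : S.card = 2
  · simpa [hS] using diffSet_le_card_sub_two_mul G S
  · exact (diffSet_lt_card_sub_four_of_card_ne_two hpos hΔ hS).le

theorem diffSet_eq_card_sub_four_iff (S : Finset V) :
    diffSet G S = Fintype.card V - 4 ↔ IsDom G S ∧ S.card = 2 := by
  by_cases hS : S.card = 2
  · simp [← diffSet_eq_card_sub_two_mul_iff_isDom, hS]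
  · simp only [hS, and_false, iff_false]
    exact (diffSet_lt_card_sub_four_of_card_ne_two hpos hΔ hS).ne

end BoundedMaxDegree

theorem finite_setOf_diffSet_of_isPacking2 :
    {d : ℤ | ∃ S : Finset V, IsPacking2 G S ∧ d = diffSet G S}.Finite :=
  (Set.finite_range (diffSet G)).subset fun _ ⟨S, _, hd⟩ => ⟨S, hd.symm⟩

theorem diffSet_le_pdiff2 {S : Finset V} (hS : IsPacking2 G S) : diffSet G S ≤ pdiff2 G :=
  le_csSup (finite_setOf_diffSet_of_isPacking2 G).bddAbove ⟨S, hS, rfl⟩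

theorem exists_isPacking2_diffSet_eq_pdiff2 : ∃ S, IsPacking2 G S ∧ diffSet G S = pdiff2 G := by
  obtain ⟨S, hS, hd⟩ : pdiff2 G ∈ {d : ℤ | ∃ S : Finset V, IsPacking2 G S ∧ d = diffSet G S} :=
    Set.Nonempty.csSup_mem ⟨_, ∅, isPacking2_empty G, rfl⟩
      (finite_setOf_diffSet_of_isPacking2 G)
  exact ⟨S, hS, hd.symm⟩

end Differential

theorem stmt15 {V : Type*} [Fintype V] [DecidableEq V] (G : SimpleGraph V)
    [DecidableRel G.Adj] (h : NoIsolated G)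
    (hΔ : (G.maxDegree : ℤ) ≤ (Fintype.card V : ℤ) - 4) :
    pdiff2 G ≤ (Fintype.card V : ℤ) - 4 ∧
      (pdiff2 G = (Fintype.card V : ℤ) - 4 ↔
        ∃ S : Finset V, IsPacking2 G S ∧ IsDom G S ∧ S.card = 2) := by
  have : Nonempty V := Fintype.card_pos_iff.mp (by omega)
  have hpos := h.maxDegree_pos
  obtain ⟨S₀, hS₀, hmax⟩ := exists_isPacking2_diffSet_eq_pdiff2 G
  have hle : pdiff2 G ≤ Fintype.card V - 4 := hmax ▸ diffSet_le_card_sub_four hpos hΔ S₀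
  refine ⟨hle, fun heq => ?_, fun ⟨S, hS, hdom, hcard⟩ => ?_⟩
  · exact ⟨S₀, hS₀, (diffSet_eq_card_sub_four_iff hpos hΔ S₀).1 (hmax.trans heq)⟩
  · refine hle.antisymm ?_
    rw [← (diffSet_eq_card_sub_four_iff hpos hΔ S).2 ⟨hdom, hcard⟩]
    exact diffSet_le_pdiff2 G hS
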